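/- For all integers m, n, r ≥ 0, in ℤ[q]: ∏_{ℓ=0}^{m+n-1} (1 + [ℓ+r]_q) = Σ_{i=0}^{n} Σ_{j=0}^{m} q^{r(n-i)} · [m]_q^{⟨n-i⟩} · qbinom(n,i) · c_q^{(r)}(m,j) · ∏_{ℓ=0}^{i-1} (1 + [ℓ+r]_q). -/

import Mathlib

/-!
Split the product at `m`. The last `n` factors are `1 + [r] + q^r [m + ℓ]`, and for arbitrary
`s, z` the q-Vandermonde-type expansion
`∏_{ℓ<n} (s + z [m + ℓ]) = ∑_i z^(n-i) [m]^⟨n-i⟩ qbinom(n,i) ∏_{ℓ<i} (s + z [ℓ])`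
holds by induction on `n`, using `[a + b] = [a] + q^a [b]` and q-Pascal. The first `m` factors are
`∑_j c_q^{(r)}(m, j)`: the row generating function `∑_j c_q(i, j) t^j = ∏_{ℓ<i} (t + [ℓ])`
combined with the same expansion at `z = 1` gives `∑_j c_q^{(r)}(m, j) t^j = ∏_{ℓ<m} (t + [r + ℓ])`.
-/

open Finset Polynomial

/-- The q-integer [n]_q = 1 + q + ⋯ + q^{n-1} in ℤ[q]. -/
noncomputable def qint (n : ℕ) : Polynomial ℤ := ∑ i ∈ range n, X ^ i

/-- The q-rising factorial [n]_q^{⟨m⟩} = ∏_{i=n}^{n+m-1} [i]_q. -/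
noncomputable def qrise (n m : ℕ) : Polynomial ℤ := ∏ i ∈ range m, qint (n + i)

/-- The q-binomial coefficient. -/
noncomputable def qbinom : ℕ → ℕ → Polynomial ℤ
  | _, 0 => 1
  | 0, _ + 1 => 0
  | n + 1, k + 1 => qbinom n k + X ^ (k + 1) * qbinom n (k + 1)

/-- The q-Stirling numbers of the first kind (natural-number index version). -/
noncomputable def qStirling1Nat : ℕ → ℕ → Polynomial ℤ
  | 0, 0 => 1
  | 0, _ + 1 => 0
  | _ + 1, 0 => 0
  | n + 1, k + 1 => qStirling1Nat n k + qint n * qStirling1Nat n (k + 1)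

/-- The q-Stirling numbers of the first kind, vanishing for negative second index. -/
noncomputable def qStirling1 (n : ℕ) (k : ℤ) : Polynomial ℤ :=
  if 0 ≤ k then qStirling1Nat n k.toNat else 0

/-- The q-r-Stirling numbers of the first kind. -/
noncomputable def qrStirling1 (r n : ℕ) (k : ℤ) : Polynomial ℤ :=
  ∑ i ∈ range (n + 1), qrise r (n - i) * qbinom n i * qStirling1 i k

theorem qint_add (a b : ℕ) : qint (a + b) = qint a + X ^ a * qint b := by
  simp [qint, sum_range_add, pow_add, mul_sum]

theorem qrise_succ (n m : ℕ) : qrise n (m + 1) = qrise n m * qint (n + m) :=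
  prod_range_succ _ _

theorem qbinom_zero_right (n : ℕ) : qbinom n 0 = 1 := by
  cases n <;> rfl

theorem qbinom_succ_succ (n k : ℕ) :
    qbinom (n + 1) (k + 1) = qbinom n k + X ^ (k + 1) * qbinom n (k + 1) := rfl

theorem qbinom_eq_zero_of_lt {n k : ℕ} (h : n < k) : qbinom n k = 0 := by
  induction n generalizing k with
  | zero => obtain ⟨k, rfl⟩ := Nat.exists_eq_succ_of_ne_zero (by omega : k ≠ 0); rfl
  | succ n ih =>
    obtain ⟨k, rfl⟩ := Nat.exists_eq_succ_of_ne_zero (by omega : k ≠ 0)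
    rw [qbinom_succ_succ, ih (by omega), ih (by omega), mul_zero, add_zero]

theorem qStirling1Nat_succ_zero (n : ℕ) : qStirling1Nat (n + 1) 0 = 0 := rfl

theorem qStirling1Nat_succ_succ (n k : ℕ) :
    qStirling1Nat (n + 1) (k + 1) = qStirling1Nat n k + qint n * qStirling1Nat n (k + 1) := rfl

theorem qStirling1Nat_eq_zero_of_lt {n k : ℕ} (h : n < k) : qStirling1Nat n k = 0 := by
  induction n generalizing k with
  | zero => obtain ⟨k, rfl⟩ := Nat.exists_eq_succ_of_ne_zero (by omega : k ≠ 0); rfl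
  | succ n ih =>
    obtain ⟨k, rfl⟩ := Nat.exists_eq_succ_of_ne_zero (by omega : k ≠ 0)
    rw [qStirling1Nat_succ_succ, ih (by omega), ih (by omega), mul_zero, add_zero]

theorem qint_mul_qStirling1Nat_zero (n : ℕ) : qint n * qStirling1Nat n 0 = 0 := by
  cases n with
  | zero => simp [qint]
  | succ n => rw [qStirling1Nat_succ_zero, mul_zero]

theorem qStirling1_natCast (n k : ℕ) : qStirling1 n k = qStirling1Nat n k := by
  simp [qStirling1]

theorem sum_qStirling1Nat_mul_pow (n : ℕ) (t : ℤ[X]) :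
    ∑ j ∈ range (n + 1), qStirling1Nat n j * t ^ j = ∏ ℓ ∈ range n, (t + qint ℓ) := by
  induction n with
  | zero => simp [qStirling1Nat]
  | succ n ih =>
    have hshift : ∑ j ∈ range (n + 1), qStirling1Nat n (j + 1) * t ^ (j + 1) =
        ∑ j ∈ range (n + 1), qStirling1Nat n j * t ^ j - qStirling1Nat n 0 := by
      rw [sum_range_succ, qStirling1Nat_eq_zero_of_lt (Nat.lt_succ_self n), sum_range_succ' _ n]
      ring
    calc ∑ j ∈ range (n + 2), qStirling1Nat (n + 1) j * t ^ j
        = t * ∑ j ∈ range (n + 1), qStirling1Nat n j * t ^ j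
            + qint n * ∑ j ∈ range (n + 1), qStirling1Nat n (j + 1) * t ^ (j + 1) := by
          simp only [sum_range_succ' _ (n + 1), qStirling1Nat_succ_succ, qStirling1Nat_succ_zero,
            zero_mul, add_zero, mul_sum, ← sum_add_distrib]
          exact sum_congr rfl fun j _ => by ring
      _ = (∏ ℓ ∈ range n, (t + qint ℓ)) * (t + qint n) := by
          rw [hshift, mul_sub, qint_mul_qStirling1Nat_zero, ih]
          ring
      _ = ∏ ℓ ∈ range (n + 1), (t + qint ℓ) := (prod_range_succ _ _).symm

theorem prod_add_mul_qint_add_eq_sum (s z : ℤ[X]) (m n : ℕ) :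
    ∏ ℓ ∈ range n, (s + z * qint (m + ℓ)) =
      ∑ i ∈ range (n + 1), z ^ (n - i) * qrise m (n - i) * qbinom n i *
        ∏ ℓ ∈ range i, (s + z * qint ℓ) := by
  induction n with
  | zero => simp [qrise, qbinom_zero_right]
  | succ n ih =>
    -- `s + z [m + n] = (s + z [i]) + z q^i [m + n - i]`
    have hsplit : ∀ i ∈ range (n + 1),
        z ^ (n - i) * qrise m (n - i) * qbinom n i * (∏ ℓ ∈ range i, (s + z * qint ℓ)) *
            (s + z * qint (m + n)) =
          z ^ (n - i) * qrise m (n - i) * qbinom n i * ∏ ℓ ∈ range (i + 1), (s + z * qint ℓ) +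
          z ^ (n + 1 - i) * qrise m (n + 1 - i) * (X ^ i * qbinom n i) *
            ∏ ℓ ∈ range i, (s + z * qint ℓ) := by
      intro i hi
      obtain ⟨k, rfl⟩ := Nat.exists_eq_add_of_le (Nat.lt_succ_iff.mp (mem_range.mp hi))
      rw [show i + k + 1 - i = k + 1 by omega, Nat.add_sub_cancel_left,
        show m + (i + k) = i + (m + k) by omega, qint_add, qrise_succ, prod_range_succ, pow_succ]
      ring
    have hpascal : ∀ i ∈ range (n + 1),
        z ^ (n + 1 - (i + 1)) * qrise m (n + 1 - (i + 1)) * qbinom (n + 1) (i + 1) *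
            ∏ ℓ ∈ range (i + 1), (s + z * qint ℓ) =
          z ^ (n - i) * qrise m (n - i) * qbinom n i * ∏ ℓ ∈ range (i + 1), (s + z * qint ℓ) +
          z ^ (n - i) * qrise m (n - i) * (X ^ (i + 1) * qbinom n (i + 1)) *
            ∏ ℓ ∈ range (i + 1), (s + z * qint ℓ) := by
      intro i _
      rw [Nat.add_sub_add_right, qbinom_succ_succ]
      ring
    have hreindex : ∑ i ∈ range (n + 1), z ^ (n + 1 - i) * qrise m (n + 1 - i) *
          (X ^ i * qbinom n i) * ∏ ℓ ∈ range i, (s + z * qint ℓ) =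
        ∑ i ∈ range (n + 1), z ^ (n - i) * qrise m (n - i) *
            (X ^ (i + 1) * qbinom n (i + 1)) * ∏ ℓ ∈ range (i + 1), (s + z * qint ℓ) +
          z ^ (n + 1 - 0) * qrise m (n + 1 - 0) * qbinom (n + 1) 0 *
            ∏ ℓ ∈ range 0, (s + z * qint ℓ) := by
      rw [sum_range_succ' _ n, sum_range_succ _ n, qbinom_eq_zero_of_lt (Nat.lt_succ_self n)]
      simp only [Nat.add_sub_add_right, qbinom_zero_right, pow_zero, prod_range_zero, mul_zero,
        zero_mul, add_zero, one_mul]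
    rw [prod_range_succ, ih, sum_mul, sum_congr rfl hsplit, sum_add_distrib,
      sum_range_succ' _ (n + 1), sum_congr rfl hpascal, sum_add_distrib, hreindex]
    ring

theorem sum_qrStirling1_mul_pow (r m : ℕ) (t : ℤ[X]) :
    ∑ j ∈ range (m + 1), qrStirling1 r m j * t ^ j = ∏ ℓ ∈ range m, (t + qint (r + ℓ)) := by
  have hrow : ∀ i ∈ range (m + 1),
      ∑ j ∈ range (m + 1), qStirling1 i j * t ^ j = ∏ ℓ ∈ range i, (t + qint ℓ) := by
    intro i hi
    rw [← sum_qStirling1Nat_mul_pow]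
    refine (sum_subset (range_subset_range.mpr (mem_range.mp hi)) fun j hj hji => ?_).symm
    rw [qStirling1_natCast, qStirling1Nat_eq_zero_of_lt (by simpa using hji), zero_mul]
  calc ∑ j ∈ range (m + 1), qrStirling1 r m j * t ^ j
      = ∑ i ∈ range (m + 1), qrise r (m - i) * qbinom m i *
          ∑ j ∈ range (m + 1), qStirling1 i j * t ^ j := by
        simp only [qrStirling1, sum_mul, mul_sum, mul_assoc]
        exact sum_comm
    _ = ∏ ℓ ∈ range m, (t + qint (r + ℓ)) := by
        rw [sum_congr rfl fun i hi => congrArg _ (hrow i hi)]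
        simpa using (prod_add_mul_qint_add_eq_sum t 1 r m).symm

theorem one_add_qint_add (ℓ r : ℕ) : 1 + qint (ℓ + r) = (1 + qint r) + X ^ r * qint ℓ := by
  rw [add_comm ℓ, qint_add, add_assoc]

theorem qprod_identity_r (m n r : ℕ) :
    ∏ ℓ ∈ range (m + n), (1 + qint (ℓ + r)) =
      ∑ i ∈ range (n + 1), ∑ j ∈ range (m + 1),
        X ^ (r * (n - i)) * qrise m (n - i) * qbinom n i * qrStirling1 r m (j : ℤ) *
          ∏ ℓ ∈ range i, (1 + qint (ℓ + r)) := by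
  have hstirling := sum_qrStirling1_mul_pow r m 1
  simp only [one_pow, mul_one, add_comm r] at hstirling
  have htail := prod_add_mul_qint_add_eq_sum (1 + qint r) (X ^ r) m n
  simp only [← one_add_qint_add, ← pow_mul] at htail
  calc ∏ ℓ ∈ range (m + n), (1 + qint (ℓ + r))
      = (∑ i ∈ range (n + 1), X ^ (r * (n - i)) * qrise m (n - i) * qbinom n i *
            ∏ ℓ ∈ range i, (1 + qint (ℓ + r))) *
          ∑ j ∈ range (m + 1), qrStirling1 r m j := by
        rw [prod_range_add, ← htail, hstirling, mul_comm]
    _ = _ := by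
        rw [sum_mul_sum]
        exact sum_congr rfl fun i _ => sum_congr rfl fun j _ => by ring
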